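/- For trees T, T' on {a,b}, define S(T) = T ∪ {w⌢c : w ∈ T, w⌢a ∉ T} ∪ {w⌢d : w ∈ T, w⌢b ∉ T}, a tree on {a,b,c,d}. If S(T) ⊆ S(T'), then T = T'. -/

import Mathlib

/-! `S(T)` remembers `T` exactly: a word of `S(T)` over `{a,b}` lies in `T`, and `w⌢c` (resp. `w⌢d`)
lies in `S(T)` iff `w ∈ T` is an `a`-leaf (resp. `b`-leaf). Hence `S(T) ⊆ S(T')` gives `T ⊆ T'`,
and conversely, climbing `T'` letter by letter, a first word `u⌢x ∈ T' \ T` would make `u ∈ T` an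
`x`-leaf, so the marked word of `u` would lie in `S(T) ⊆ S(T')`, contradicting `u⌢x ∈ T'`. -/

/-- Inclusion of `{a,b}^{<ℕ}` into `{a,b,c,d}^{<ℕ}` (`a,b,c,d` are `0,1,2,3`). -/
def abIncl : List (Fin 2) → List (Fin 4) :=
  List.map (Fin.castLE (by omega))

/-- The outlining map `S(T) = T ∪ t_a(T)⌢c ∪ t_b(T)⌢d` sending a tree on `{a,b}` to a
tree on `{a,b,c,d}`, where `t_a(T) = {w ∈ T : w⌢a ∉ T}` and `t_b(T) = {w ∈ T : w⌢b ∉ T}`. -/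
def outline (T : Set (List (Fin 2))) : Set (List (Fin 4)) :=
  (abIncl '' T) ∪
  {s | ∃ w ∈ T, w ++ [0] ∉ T ∧ s = abIncl w ++ [2]} ∪
  {s | ∃ w ∈ T, w ++ [1] ∉ T ∧ s = abIncl w ++ [3]}

lemma abIncl_injective : Function.Injective abIncl :=
  List.map_injective_iff.mpr fun x y hxy => Fin.ext (by simpa using congrArg Fin.val hxy)

lemma val_lt_two_of_mem_abIncl {w : List (Fin 2)} {y : Fin 4} (hy : y ∈ abIncl w) : y.val < 2 := by
  obtain ⟨x, -, rfl⟩ := List.mem_map.1 hy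
  simpa using x.isLt

lemma abIncl_ne_append_singleton {w v : List (Fin 2)} {y : Fin 4} (hy : 2 ≤ y.val) :
    abIncl w ≠ abIncl v ++ [y] := fun h => by
  have := val_lt_two_of_mem_abIncl (h ▸ List.mem_append_right (abIncl v) (List.mem_singleton_self y))
  omega

lemma abIncl_mem_outline_iff (T : Set (List (Fin 2))) (w : List (Fin 2)) :
    abIncl w ∈ outline T ↔ w ∈ T := by
  simp [outline, abIncl_injective.mem_set_image, abIncl_ne_append_singleton]

/-- `c = 2` marks the `a`-leaves and `d = 3` the `b`-leaves. -/
def leafMarker (x : Fin 2) : Fin 4 := Fin.natAdd 2 x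

lemma append_leafMarker_mem_outline_iff (T : Set (List (Fin 2))) (w : List (Fin 2)) (x : Fin 2) :
    abIncl w ++ [leafMarker x] ∈ outline T ↔ w ∈ T ∧ w ++ [x] ∉ T := by
  fin_cases x <;> simp [outline, leafMarker, abIncl_ne_append_singleton,
    List.append_singleton_inj, abIncl_injective.eq_iff]

theorem outline_subset_iff_general (T T' : Set (List (Fin 2)))
    (hT : ∀ u v : List (Fin 2), u <+: v → v ∈ T → u ∈ T) (hTne : T.Nonempty)
    (hT' : ∀ u v : List (Fin 2), u <+: v → v ∈ T' → u ∈ T')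
    (h : outline T ⊆ outline T') :
    T = T' := by
  refine Set.Subset.antisymm (fun w hw => ?_) (fun w hw => ?_)
  · exact (abIncl_mem_outline_iff T' w).1 (h ((abIncl_mem_outline_iff T w).2 hw))
  · induction w using List.reverseRecOn with
    | nil => exact hT [] _ List.nil_prefix hTne.some_mem
    | append_singleton u x ih =>
      have hu : u ∈ T := ih (hT' u _ (List.prefix_append u [x]) hw)
      by_contra hux
      have hmarked := h ((append_leafMarker_mem_outline_iff T u x).2 ⟨hu, hux⟩)
      exact ((append_leafMarker_mem_outline_iff T' u x).1 hmarked).2 hw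

/-- If `T, T'` are trees on `{a,b}` and `S(T) ⊆ S(T')`, then `T = T'`. -/
theorem outline_subset_iff (T T' : Set (List (Fin 2)))
    (hT : ∀ u v : List (Fin 2), u <+: v → v ∈ T → u ∈ T) (hTne : T.Nonempty)
    (hT' : ∀ u v : List (Fin 2), u <+: v → v ∈ T' → u ∈ T') (hT'ne : T'.Nonempty)
    (h : outline T ⊆ outline T') :
    T = T' :=
  outline_subset_iff_general T T' hT hTne hT' h
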